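/- arXiv:1712.07578 — 2 statements merged into one kernel-verified Lean document; each statement's English description precedes it below -/
import Mathlib

section
/- Let α, β ∈ ℂ and set a = sin α, b = sin β, c = sin(α+β). Then the Heron transform H(a,b,c) = (ac, b²−a², bc) equals sin(α+β)·(sin α, sin(β−α), sin β), i.e., H maps a triangle with base angles (α, β) to a scalar multiple of the sine-triple of a triangle with base angles (α, β−α). -/
def heron (x : ℂ × ℂ × ℂ) : ℂ × ℂ × ℂ :=
  (x.1 * x.2.2, x.2.1 ^ 2 - x.1 ^ 2, x.2.1 * x.2.2)

theorem heron_on_angles (α β : ℂ) :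
    heron (Complex.sin α, Complex.sin β, Complex.sin (α + β)) =
      (Complex.sin (α + β) * Complex.sin α,
       Complex.sin (α + β) * Complex.sin (β - α),
       Complex.sin (α + β) * Complex.sin β) := by
  simp only [heron, Prod.mk.injEq]
  refine ⟨mul_comm _ _, ?_, mul_comm _ _⟩
  simp only [Complex.sin_add, Complex.sin_sub]
  have ha := Complex.sin_sq_add_cos_sq α
  have hb := Complex.sin_sq_add_cos_sq β
  linear_combination (Complex.sin α ^ 2) * hb - (Complex.sin β ^ 2) * ha
end

section
/- Define f₁₂(a,b,c) = b² − a² − ac and f₁₃(a,b,c) = (b+a)(b−a)² − ac², and let H(a,b,c) = (ac, b²−a², bc). Then f₁₂(H(a,b,c)) = (b+a)·f₁₃(a,b,c) as polynomials in a, b, c. -/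
def f12 (x : ℂ × ℂ × ℂ) : ℂ := x.2.1 ^ 2 - x.1 ^ 2 - x.1 * x.2.2

def f13 (x : ℂ × ℂ × ℂ) : ℂ := (x.2.1 + x.1) * (x.2.1 - x.1) ^ 2 - x.1 * x.2.2 ^ 2

theorem f12_heron (a b c : ℂ) :
    f12 (heron (a, b, c)) = (b + a) * f13 (a, b, c) := by simp only [f12, f13, heron]; ring
end
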